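/- For every integer a ≥ 4, the currency (1, 2, a, a+1, 2a) is orderly, while its prefix currency (1, 2, a, a+1) is not orderly. -/

import Mathlib

/-- The largest coin of the currency with coins `a 0, …, a k` that is `≤ c`
(or `0` if there is none). -/
def bestCoin (a : ℕ → ℕ) (k : ℕ) (c : ℕ) : ℕ :=
  ((Finset.range (k + 1)).filter fun j => a j ≤ c).sup a

/-- The number of coins used by the greedy algorithm to pay the amount `c`,
using the currency with coins `a 0, …, a k`. -/
def grd (a : ℕ → ℕ) (k : ℕ) : ℕ → ℕ
  | 0 => 0
  | c + 1 =>
    if h : 1 ≤ bestCoin a k (c + 1) then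
      grd a k (c + 1 - bestCoin a k (c + 1)) + 1
    else 0
  decreasing_by omega

/-- The minimal number of coins needed to pay the amount `c`,
using the currency with coins `a 0, …, a k`. -/
noncomputable def opt (a : ℕ → ℕ) (k : ℕ) (c : ℕ) : ℕ :=
  sInf {n | ∃ x : Fin (k + 1) → ℕ, (∑ i, x i) = n ∧ (∑ i, x i * a i.1) = c}

/-- `a 0, …, a k` is a currency: it starts with the coin `1` and is strictly increasing. -/
def IsCurrency (a : ℕ → ℕ) (k : ℕ) : Prop :=
  a 0 = 1 ∧ ∀ i j : ℕ, i < j → j ≤ k → a i < a j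

/-- The currency with coins `a 0, …, a k` is orderly: the greedy payment is
optimal for every positive amount. -/
def Orderly (a : ℕ → ℕ) (k : ℕ) : Prop :=
  ∀ c : ℕ, 0 < c → opt a k c = grd a k c

/-- The set `𝒜(a) = ⋃_{m ≥ 1} {m·a − l : 0 ≤ l ≤ m}`. -/
def calA (a : ℕ) : Set ℕ :=
  {x | ∃ m l : ℕ, 1 ≤ m ∧ l ≤ m ∧ x = m * a - l}

/-!
Greedy is optimal as soon as `grd c ≤ grd (c - v) + 1` for every coin `v ≤ c`: removing
coins one at a time from any payment of `c` then shows that `grd c` is at most the number of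
coins used. For the currency `(1, 2, a, a + 1, 2a)` the greedy count has the closed form
`q + h(r)` for `c = 2a·q + r` with `r < 2a`, and the one-coin inequality becomes a finite
case check on `h`. Without the coin `2a`, greedy pays `2a` as `(a + 1) + (a - 1)` with at
least three coins, while `a + a` needs two.
-/

section SingleCoin

variable {ι : Type*} [Fintype ι] [DecidableEq ι]

theorem sum_add_single_one (x : ι → ℕ) (j : ι) :
    ∑ i, (x + Pi.single j 1 : ι → ℕ) i = ∑ i, x i + 1 := by
  simp [Finset.sum_add_distrib]

theorem sum_mul_add_single_one (x w : ι → ℕ) (j : ι) :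
    ∑ i, (x + Pi.single j 1 : ι → ℕ) i * w i = ∑ i, x i * w i + w j := by
  simp [add_mul, Finset.sum_add_distrib, Pi.single_apply]

end SingleCoin

section Greedy

variable {a : ℕ → ℕ} {k : ℕ}

theorem bestCoin_le (c : ℕ) : bestCoin a k c ≤ c :=
  Finset.sup_le fun _ hj => (Finset.mem_filter.1 hj).2

theorem one_le_bestCoin (h0 : a 0 = 1) {c : ℕ} (hc : 0 < c) : 1 ≤ bestCoin a k c :=
  h0 ▸ Finset.le_sup (f := a) (Finset.mem_filter.2 ⟨by simp, by omega⟩)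

theorem exists_eq_bestCoin {c : ℕ} (hc : 0 < bestCoin a k c) :
    ∃ j : Fin (k + 1), a j = bestCoin a k c := by
  obtain ⟨j, hj, hja⟩ := Finset.exists_mem_eq_sup ((Finset.range (k + 1)).filter (a · ≤ c))
    (Finset.nonempty_iff_ne_empty.2 fun h => by simp [bestCoin, h] at hc) a
  exact ⟨⟨j, Finset.mem_range.1 (Finset.mem_filter.1 hj).1⟩, hja.symm⟩

theorem bestCoin_eq (hA : IsCurrency a k) {j c : ℕ} (hj : j ≤ k) (hjc : a j ≤ c)
    (hnext : j < k → c < a (j + 1)) : bestCoin a k c = a j := by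
  refine le_antisymm (Finset.sup_le fun i hi => ?_)
    (Finset.le_sup (Finset.mem_filter.2 ⟨Finset.mem_range.2 (by omega), hjc⟩))
  obtain ⟨hik, hic⟩ := Finset.mem_filter.1 hi
  rw [Finset.mem_range] at hik
  obtain hij | rfl | hji : i < j ∨ i = j ∨ j < i := by omega
  · exact (hA.2 i j hij hj).le
  · rfl
  · have := hnext (by omega)
    obtain rfl | hsucc : i = j + 1 ∨ j + 1 < i := by omega
    · omega
    · have := hA.2 (j + 1) i hsucc (by omega)
      omega

theorem grd_eq_grd_sub_add_one {c b : ℕ} (hb : bestCoin a k c = b) (hb0 : 0 < b) :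
    grd a k c = grd a k (c - b) + 1 := by
  obtain ⟨n, rfl⟩ : ∃ n, c = n + 1 :=
    ⟨c - 1, by have := bestCoin_le (a := a) (k := k) c; omega⟩
  rw [grd, dif_pos (by omega), hb]

theorem exists_sum_eq_grd (h0 : a 0 = 1) (c : ℕ) :
    ∃ x : Fin (k + 1) → ℕ, ∑ i, x i = grd a k c ∧ ∑ i, x i * a i = c := by
  induction c using Nat.strong_induction_on with
  | _ c ih =>
    rcases Nat.eq_zero_or_pos c with rfl | hc
    · exact ⟨0, by simp [grd], by simp⟩
    have hb := one_le_bestCoin (k := k) h0 hc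
    obtain ⟨j, hj⟩ := exists_eq_bestCoin hb
    obtain ⟨x, hx, hxc⟩ := ih (c - a j) (by omega)
    refine ⟨x + Pi.single j 1, ?_, ?_⟩
    · rw [sum_add_single_one, hx, grd_eq_grd_sub_add_one hj.symm (by omega)]
    · rw [sum_mul_add_single_one, hxc]
      have := bestCoin_le (a := a) (k := k) c
      omega

theorem opt_le_sum (x : Fin (k + 1) → ℕ) : opt a k (∑ i, x i * a i) ≤ ∑ i, x i :=
  Nat.sInf_le ⟨x, rfl, rfl⟩

theorem grd_le_sum (hgrd : ∀ c, ∀ j ≤ k, a j ≤ c → grd a k c ≤ grd a k (c - a j) + 1)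
    (x : Fin (k + 1) → ℕ) : grd a k (∑ i, x i * a i) ≤ ∑ i, x i := by
  induction hn : ∑ i, x i generalizing x with
  | zero =>
    have : x = 0 := funext fun i => by simpa using (Finset.sum_eq_zero_iff.1 hn) i
    simp [this, grd]
  | succ n ih =>
    obtain ⟨j, hj⟩ : ∃ j, x j ≠ 0 := by
      by_contra! h
      simp [h] at hn
    obtain ⟨y, rfl⟩ : ∃ y, x = y + Pi.single j 1 :=
      ⟨Function.update x j (x j - 1), funext fun i => by by_cases h : i = j <;> simp [h]; omega⟩
    rw [sum_add_single_one] at hn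
    rw [sum_mul_add_single_one]
    calc grd a k (∑ i, y i * a i + a j) ≤ grd a k (∑ i, y i * a i) + 1 := by
          simpa using hgrd (∑ i, y i * a i + a j) j (by omega) (by omega)
      _ ≤ n + 1 := by have := ih y (by omega); omega

theorem orderly_of_grd_le_grd_sub_add_one (h0 : a 0 = 1)
    (hgrd : ∀ c, ∀ j ≤ k, a j ≤ c → grd a k c ≤ grd a k (c - a j) + 1) :
    Orderly a k := by
  intro c _
  obtain ⟨x, hx, rfl⟩ := exists_sum_eq_grd (k := k) h0 c
  refine le_antisymm (hx ▸ opt_le_sum x) (le_csInf ⟨_, x, rfl, rfl⟩ ?_)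
  rintro n ⟨y, rfl, hy⟩
  exact hy ▸ grd_le_sum hgrd y

end Greedy

def exceptionalCoins (a : ℕ) : ℕ → ℕ := fun i => if i = 0 then 1 else if i = 1 then 2
  else if i = 2 then a else if i = 3 then a + 1 else 2 * a

section ExceptionalCoins

variable {a : ℕ}

@[simp] theorem exceptionalCoins_zero : exceptionalCoins a 0 = 1 := rfl
@[simp] theorem exceptionalCoins_one : exceptionalCoins a 1 = 2 := rfl
@[simp] theorem exceptionalCoins_two : exceptionalCoins a 2 = a := rfl
@[simp] theorem exceptionalCoins_three : exceptionalCoins a 3 = a + 1 := rfl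
@[simp] theorem exceptionalCoins_four : exceptionalCoins a 4 = 2 * a := rfl

/-- Greedy count of `(1, 2, a, a + 1, 2a)` on `r < 2a`: below `a` it pays with `2`s and at
most one `1`; above `a` it takes `a + 1` first. -/
def greedyRem (a r : ℕ) : ℕ :=
  if r < a then (r + 1) / 2 else if r = a then 1 else (r - a) / 2 + 1

variable (ha : 4 ≤ a)
include ha

theorem greedyRem_le_greedyRem_sub_add_one {j r : ℕ} (hj : j ≤ 4) (hr : r < 2 * a)
    (hjr : exceptionalCoins a j ≤ r) :
    greedyRem a r ≤ greedyRem a (r - exceptionalCoins a j) + 1 := by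
  interval_cases j <;>
    simp only [exceptionalCoins_zero, exceptionalCoins_one, exceptionalCoins_two,
      exceptionalCoins_three, exceptionalCoins_four] at hjr ⊢ <;>
    unfold greedyRem <;> split_ifs <;> omega

theorem greedyRem_le_greedyRem_two_mul_add_sub {j r : ℕ} (hj : j ≤ 4) (hr : r < 2 * a)
    (hrj : r < exceptionalCoins a j) :
    greedyRem a r ≤ greedyRem a (2 * a + r - exceptionalCoins a j) := by
  interval_cases j <;>
    simp only [exceptionalCoins_zero, exceptionalCoins_one, exceptionalCoins_two,
      exceptionalCoins_three, exceptionalCoins_four] at hrj ⊢ <;>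
    unfold greedyRem <;> split_ifs <;> omega

theorem isCurrency_exceptionalCoins {k : ℕ} (hk : k ≤ 4) :
    IsCurrency (exceptionalCoins a) k := by
  refine ⟨rfl, fun i j hij hjk => ?_⟩
  have hj : j ≤ 4 := hjk.trans hk
  interval_cases j <;> interval_cases i <;> simp <;> omega

theorem bestCoin_exceptionalCoins {k j c : ℕ} (hk : k ≤ 4) (hj : j ≤ k)
    (hjc : exceptionalCoins a j ≤ c) (hnext : j < k → c < exceptionalCoins a (j + 1)) :
    bestCoin (exceptionalCoins a) k c = exceptionalCoins a j :=
  bestCoin_eq (isCurrency_exceptionalCoins ha hk) hj hjc hnext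

theorem grd_exceptionalCoins_of_lt {k c : ℕ} (hk1 : 1 ≤ k) (hk : k ≤ 4) (hc : c < a) :
    grd (exceptionalCoins a) k c = (c + 1) / 2 := by
  induction c using Nat.strong_induction_on with
  | _ c ih =>
    obtain rfl | rfl | hc2 : c = 0 ∨ c = 1 ∨ 2 ≤ c := by omega
    · simp [grd]
    · rw [grd_eq_grd_sub_add_one (bestCoin_exceptionalCoins ha hk (j := 0) (by omega) (by simp)
        (fun _ => by simp)) (by simp)]
      simp [grd]
    · rw [grd_eq_grd_sub_add_one (bestCoin_exceptionalCoins ha hk (j := 1) hk1 (by simpa)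
        (fun _ => by simpa)) (by simp), exceptionalCoins_one, ih (c - 2) (by omega) (by omega)]
      omega

theorem grd_exceptionalCoins_of_lt_two_mul {r : ℕ} (hr : r < 2 * a) :
    grd (exceptionalCoins a) 4 r = greedyRem a r := by
  obtain hra | rfl | hra : r < a ∨ r = a ∨ a < r := by omega
  · rw [grd_exceptionalCoins_of_lt ha (by omega) le_rfl hra, greedyRem, if_pos hra]
  · rw [grd_eq_grd_sub_add_one (bestCoin_exceptionalCoins ha le_rfl (j := 2) (by omega)
        (by simp) (fun _ => by simp)) (by simp; omega)]
    simp [grd, greedyRem]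
  · rw [grd_eq_grd_sub_add_one (bestCoin_exceptionalCoins ha le_rfl (j := 3) (by omega)
        (by simp; omega) (fun _ => by simpa)) (by simp), exceptionalCoins_three,
      grd_exceptionalCoins_of_lt ha (by omega) le_rfl (by omega), greedyRem, if_neg (by omega),
      if_neg (by omega)]
    omega

theorem grd_exceptionalCoins (q : ℕ) {r : ℕ} (hr : r < 2 * a) :
    grd (exceptionalCoins a) 4 (2 * a * q + r) = q + greedyRem a r := by
  induction q with
  | zero => simpa using grd_exceptionalCoins_of_lt_two_mul ha hr
  | succ q ih =>
    rw [grd_eq_grd_sub_add_one (bestCoin_exceptionalCoins ha le_rfl (j := 4) le_rfl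
        (by simp; nlinarith) (by omega)) (by simp; omega), exceptionalCoins_four,
      show 2 * a * (q + 1) + r - 2 * a = 2 * a * q + r by rw [mul_add]; omega, ih]
    omega

theorem grd_exceptionalCoins_le {c j : ℕ} (hj : j ≤ 4) (hjc : exceptionalCoins a j ≤ c) :
    grd (exceptionalCoins a) 4 c ≤
      grd (exceptionalCoins a) 4 (c - exceptionalCoins a j) + 1 := by
  obtain ⟨q, r, hr, rfl⟩ : ∃ q r, r < 2 * a ∧ c = 2 * a * q + r :=
    ⟨c / (2 * a), c % (2 * a), Nat.mod_lt _ (by omega), (Nat.div_add_mod c (2 * a)).symm⟩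
  have hcoin : exceptionalCoins a j ≤ 2 * a := by interval_cases j <;> simp <;> omega
  rw [grd_exceptionalCoins ha q hr]
  obtain hjr | hrj := le_or_gt (exceptionalCoins a j) r
  · rw [show 2 * a * q + r - exceptionalCoins a j = 2 * a * q + (r - exceptionalCoins a j) by
        omega, grd_exceptionalCoins ha q (by omega)]
    have := greedyRem_le_greedyRem_sub_add_one ha hj hr hjr
    omega
  · obtain _ | q := q
    · omega
    rw [show 2 * a * (q + 1) + r - exceptionalCoins a j
        = 2 * a * q + (2 * a + r - exceptionalCoins a j) by rw [mul_add]; omega,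
      grd_exceptionalCoins ha q (by omega)]
    have := greedyRem_le_greedyRem_two_mul_add_sub ha hj hr hrj
    omega

theorem orderly_exceptionalCoins : Orderly (exceptionalCoins a) 4 :=
  orderly_of_grd_le_grd_sub_add_one rfl fun _ _ hj hjc => grd_exceptionalCoins_le ha hj hjc

theorem not_orderly_exceptionalCoins_three : ¬ Orderly (exceptionalCoins a) 3 := by
  intro h
  have hgrd : grd (exceptionalCoins a) 3 (2 * a) = a / 2 + 1 := by
    rw [grd_eq_grd_sub_add_one (bestCoin_exceptionalCoins ha (k := 3) (j := 3) (by norm_num)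
        le_rfl (by simp; omega) (by omega)) (by simp), exceptionalCoins_three,
      grd_exceptionalCoins_of_lt ha (by norm_num) (by norm_num) (by omega)]
    omega
  have hopt : opt (exceptionalCoins a) 3 (2 * a) ≤ 2 := by
    simpa [Fin.sum_univ_four, Pi.single_apply, two_mul] using
      opt_le_sum (a := exceptionalCoins a) (Pi.single (2 : Fin 4) 2)
  have := h (2 * a) (by omega)
  omega

end ExceptionalCoins

/-- For every `a ≥ 4` the currency `(1, 2, a, a+1, 2a)` is orderly, while its
prefix `(1, 2, a, a+1)` is not. -/
theorem exceptional_family (a : ℕ) (ha : 4 ≤ a) :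
    Orderly (fun i => if i = 0 then 1 else if i = 1 then 2
      else if i = 2 then a else if i = 3 then a + 1 else 2 * a) 4 ∧
    ¬ Orderly (fun i => if i = 0 then 1 else if i = 1 then 2
      else if i = 2 then a else if i = 3 then a + 1 else 2 * a) 3 :=
  ⟨orderly_exceptionalCoins ha, not_orderly_exceptionalCoins_three ha⟩
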